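/- Let f be a norm on ℝ^p, let (a, b) be a linear classifier with a ≠ 0, and let x_F¹, x_F² ∈ ℝ^p both satisfy ⟪a, x_F^i⟫ < b. Suppose x_F¹ + v¹ is an optimal counterfactual of x_F¹ under f and x_F² + v² is an optimal counterfactual of x_F² under f, with v¹ ≠ 0 and v² ≠ 0. Then x_F¹ + (f(v¹) / f(v²)) • v² is also an optimal counterfactual of x_F¹ under f (and symmetrically x_F² + (f(v²) / f(v¹)) • v¹ is an optimal counterfactual of x_F²). -/
import Mathlib


open Finset

noncomputable section

/-- The standard inner product on `Fin p → ℝ`. -/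
def dot {p : ℕ} (a x : Fin p → ℝ) : ℝ := ∑ k, a k * x k

/-- `f` is a norm on `ℝ^p`. -/
def IsNorm {p : ℕ} (f : (Fin p → ℝ) → ℝ) : Prop :=
  (∀ x, f x = 0 ↔ x = 0) ∧ (∀ (c : ℝ) (x : Fin p → ℝ), f (c • x) = |c| * f x) ∧
    (∀ x y, f (x + y) ≤ f x + f y)

/-- The dual norm `f*(w) = sup { ⟪w, v⟫ : f v ≤ 1 }`. -/
def dualNorm {p : ℕ} (f : (Fin p → ℝ) → ℝ) (w : Fin p → ℝ) : ℝ :=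
  sSup {t : ℝ | ∃ v : Fin p → ℝ, f v ≤ 1 ∧ t = dot w v}

/-- `xCF` is an optimal counterfactual of the factual `xF` (classified 'No') under norm `f`. -/
def IsOptCF {p : ℕ} (a : Fin p → ℝ) (b : ℝ) (f : (Fin p → ℝ) → ℝ)
    (xF xCF : Fin p → ℝ) : Prop :=
  b ≤ dot a xCF ∧ ∀ z : Fin p → ℝ, b ≤ dot a z → f (xCF - xF) ≤ f (z - xF)

/-- `xRCF` is an optimal robust counterfactual of the factual `xF` (classified 'No')
under norm `f`, with robustness norm `g` and radius `ρ`. -/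
def IsOptRCF {p : ℕ} (a : Fin p → ℝ) (b : ℝ) (f g : (Fin p → ℝ) → ℝ) (ρ : ℝ)
    (xF xRCF : Fin p → ℝ) : Prop :=
  (∀ s : Fin p → ℝ, g s ≤ ρ → b ≤ dot a (xRCF + s)) ∧
    ∀ z : Fin p → ℝ, (∀ s : Fin p → ℝ, g s ≤ ρ → b ≤ dot a (z + s)) →
      f (xRCF - xF) ≤ f (z - xF)

/-- `w` is a subgradient of `f` at `x₀`. -/
def IsSubgradient {p : ℕ} (f : (Fin p → ℝ) → ℝ) (x₀ w : Fin p → ℝ) : Prop :=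
  ∀ y : Fin p → ℝ, f x₀ + dot w (y - x₀) ≤ f y

/-- Interchanging counterfactual directions: if `x_F¹ + v¹` and `x_F² + v²` are optimal
counterfactuals of `x_F¹` and `x_F²`, then rescaling either direction to the other
factual's counterfactual distance again yields optimal counterfactuals. -/
theorem cf_direction_interchange {p : ℕ} (hp : 1 ≤ p)
    (f : (Fin p → ℝ) → ℝ) (hf : IsNorm f)
    (a : Fin p → ℝ) (ha : a ≠ 0) (b : ℝ)
    (xF₁ xF₂ v₁ v₂ : Fin p → ℝ)
    (hxF₁ : dot a xF₁ < b) (hxF₂ : dot a xF₂ < b)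
    (hcf₁ : IsOptCF a b f xF₁ (xF₁ + v₁)) (hcf₂ : IsOptCF a b f xF₂ (xF₂ + v₂))
    (hv₁ : v₁ ≠ 0) (hv₂ : v₂ ≠ 0) :
    IsOptCF a b f xF₁ (xF₁ + (f v₁ / f v₂) • v₂) ∧
      IsOptCF a b f xF₂ (xF₂ + (f v₂ / f v₁) • v₁) := by
  obtain ⟨hf0, hfs, hft⟩ := hf
  have dot_add : ∀ x y : Fin p → ℝ, dot a (x + y) = dot a x + dot a y := by
    intro x y; simp [dot, mul_add, Finset.sum_add_distrib]
  have dot_smul : ∀ (c : ℝ) (x : Fin p → ℝ), dot a (c • x) = c * dot a x := by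
    intro c x; simp [dot, Finset.mul_sum, mul_left_comm]
  have hnn : ∀ x, 0 ≤ f x := by
    intro x
    have h0 : f 0 = 0 := (hf0 0).2 rfl
    have hneg : f (-x) = f x := by simpa using hfs (-1) x
    have := hft x (-x)
    simp [h0, hneg] at this
    linarith
  have hfv₁ : 0 < f v₁ := lt_of_le_of_ne (hnn v₁) (fun h => hv₁ ((hf0 v₁).1 h.symm))
  have hfv₂ : 0 < f v₂ := lt_of_le_of_ne (hnn v₂) (fun h => hv₂ ((hf0 v₂).1 h.symm))
  set c₁ := b - dot a xF₁ with hc₁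
  set c₂ := b - dot a xF₂ with hc₂
  have hc₁0 : 0 < c₁ := by simp [hc₁]; linarith
  have hc₂0 : 0 < c₂ := by simp [hc₂]; linarith
  have hav₁ : c₁ ≤ dot a v₁ := by have := hcf₁.1; rw [dot_add] at this; linarith
  have hav₂ : c₂ ≤ dot a v₂ := by have := hcf₂.1; rw [dot_add] at this; linarith
  -- cross feasibility bounds
  have key : ∀ (c c' : ℝ) (v : Fin p → ℝ) (xF : Fin p → ℝ),
      0 < c → 0 < c' → c' ≤ dot a v → c = b - dot a xF →
      b ≤ dot a (xF + (c / c') • v) := by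
    intro c c' v xF hc hc' hav hceq
    rw [dot_add, dot_smul]
    have h1 : c / c' * dot a v ≥ c / c' * c' := by
      apply mul_le_mul_of_nonneg_left hav (le_of_lt (div_pos hc hc'))
    rw [div_mul_cancel₀ _ (ne_of_gt hc')] at h1
    linarith [hceq ▸ h1]
  have hb₁ : f v₂ ≤ (c₂ / c₁) * f v₁ := by
    have hfeas := key c₂ c₁ v₁ xF₂ hc₂0 hc₁0 hav₁ hc₂
    have := hcf₂.2 _ hfeas
    rw [add_sub_cancel_left, add_sub_cancel_left, hfs] at this
    rwa [abs_of_pos (div_pos hc₂0 hc₁0)] at this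
  have hb₂ : f v₁ ≤ (c₁ / c₂) * f v₂ := by
    have hfeas := key c₁ c₂ v₂ xF₁ hc₁0 hc₂0 hav₂ hc₁
    have := hcf₁.2 _ hfeas
    rw [add_sub_cancel_left, add_sub_cancel_left, hfs] at this
    rwa [abs_of_pos (div_pos hc₁0 hc₂0)] at this
  constructor
  · constructor
    · rw [dot_add, dot_smul]
      have hlam : c₁ / c₂ ≤ f v₁ / f v₂ := by
        rw [div_le_div_iff₀ hc₂0 hfv₂]
        nlinarith [mul_le_mul_of_nonneg_left hb₁ (le_of_lt hc₁0),
          div_mul_cancel₀ c₂ (ne_of_gt hc₁0)]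
      have h2 : (c₁ / c₂) * c₂ ≤ (f v₁ / f v₂) * dot a v₂ := by
        apply mul_le_mul hlam hav₂ (le_of_lt hc₂0)
        positivity
      rw [div_mul_cancel₀ _ (ne_of_gt hc₂0)] at h2
      linarith
    · intro z hz
      rw [add_sub_cancel_left, hfs, abs_of_pos (div_pos hfv₁ hfv₂),
        div_mul_cancel₀ _ (ne_of_gt hfv₂)]
      have := hcf₁.2 z hz
      rwa [add_sub_cancel_left] at this
  · constructor
    · rw [dot_add, dot_smul]
      have hlam : c₂ / c₁ ≤ f v₂ / f v₁ := by
        rw [div_le_div_iff₀ hc₁0 hfv₁]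
        nlinarith [mul_le_mul_of_nonneg_left hb₂ (le_of_lt hc₂0),
          div_mul_cancel₀ c₁ (ne_of_gt hc₂0)]
      have h2 : (c₂ / c₁) * c₁ ≤ (f v₂ / f v₁) * dot a v₁ := by
        apply mul_le_mul hlam hav₁ (le_of_lt hc₁0)
        positivity
      rw [div_mul_cancel₀ _ (ne_of_gt hc₁0)] at h2
      linarith
    · intro z hz
      rw [add_sub_cancel_left, hfs, abs_of_pos (div_pos hfv₂ hfv₁),
        div_mul_cancel₀ _ (ne_of_gt hfv₁)]
      have := hcf₂.2 z hz
      rwa [add_sub_cancel_left] at this
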